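/- arXiv:1009.5588 — 5 statements merged into one kernel-verified Lean document; each statement's English description precedes it below -/
import Mathlib

section
/- For every integer k ≥ 1 and every real c > 0 there exists μ ∈ (0, 1/2) such that 2 · g(μ)^c / (μ^μ (1−μ)^{1−μ}) > 4 · (1 − 2^{−k})^{2c}. Consequently, the maximum over μ ∈ [0,1] of the exponential growth rate 2 · g(μ)^c / (μ^μ (1−μ)^{1−μ}) of the second moment of the number of solutions of random k-SAT strictly exceeds its value 4(1−2^{−k})^{2c} at μ = 1/2, which is the squared growth rate of the first moment. -/
/-!
For `0 < μ < 1` the growth rate equals `exp (log 2 + c * log g(μ) + H(μ))`, where `H` is the binary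
entropy in nats. The entropy is stationary at `μ = 1/2`, whereas `g` is strictly decreasing there,
so this exponent has negative derivative at `1/2` and is therefore larger slightly to the left.
-/

open Real Filter Topology

lemma HasDerivAt.eventually_nhdsLT_lt_of_neg {f : ℝ → ℝ} {f' x : ℝ} (hf : HasDerivAt f f' x)
    (hf' : f' < 0) : ∀ᶠ y in 𝓝[<] x, f x < f y := by
  filter_upwards [(hasDerivAt_iff_tendsto_slope_left_right.mp hf).1.eventually_lt_const hf',
    self_mem_nhdsWithin] with y hslope (hyx : y < x)
  rwa [slope_comm, slope_neg_iff_of_le hyx.le] at hslope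

noncomputable def bothSatProb (k : ℕ) (μ : ℝ) : ℝ := 1 - 2 / 2 ^ k + ((1 - μ) / 2) ^ k

noncomputable def logSecondMomentRate (k : ℕ) (c μ : ℝ) : ℝ :=
  log 2 + c * log (bothSatProb k μ) + binEntropy μ

lemma bothSatProb_half (k : ℕ) : bothSatProb k (1 / 2) = (1 - 1 / 2 ^ k) ^ 2 := by
  have h : ((1 - 1 / 2 : ℝ) / 2) ^ k = (1 / 2 ^ k) ^ 2 := by
    rw [show (1 - 1 / 2 : ℝ) / 2 = (1 / 2) ^ 2 by norm_num, ← pow_mul, pow_mul', one_div_pow]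
  rw [bothSatProb, h]
  ring

lemma bothSatProb_pos {k : ℕ} (hk : 1 ≤ k) {μ : ℝ} (hμ : μ < 1) : 0 < bothSatProb k μ := by
  have : 0 ≤ 1 - 2 / (2 : ℝ) ^ k := by
    rw [sub_nonneg, div_le_one (by positivity)]; exact le_self_pow₀ one_le_two (by omega)
  have : 0 < ((1 - μ) / 2) ^ k := pow_pos (by linarith) k
  unfold bothSatProb; linarith

lemma hasDerivAt_bothSatProb (k : ℕ) (μ : ℝ) :
    HasDerivAt (bothSatProb k) (-(k / 2 * ((1 - μ) / 2) ^ (k - 1))) μ := by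
  refine ((((hasDerivAt_id μ).const_sub 1).div_const 2).pow k |>.const_add
    (1 - 2 / 2 ^ k)).congr_deriv ?_
  simp only [id_eq]
  ring

lemma hasDerivAt_logSecondMomentRate_half {k : ℕ} (hk : 1 ≤ k) (c : ℝ) :
    HasDerivAt (logSecondMomentRate k c)
      (c * (-(k / 2 * (1 / 4) ^ (k - 1)) / bothSatProb k (1 / 2))) (1 / 2) := by
  have hg := (hasDerivAt_bothSatProb k (1 / 2)).log (bothSatProb_pos hk (by norm_num)).ne'
  have hH := hasDerivAt_binEntropy (p := 1 / 2) (by norm_num) (by norm_num)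
  refine (((hg.const_mul c).const_add (log 2)).add hH).congr_deriv ?_
  norm_num

lemma exp_logSecondMomentRate {k : ℕ} (hk : 1 ≤ k) (c : ℝ) {μ : ℝ} (hμ₀ : 0 < μ) (hμ₁ : μ < 1) :
    exp (logSecondMomentRate k c μ)
      = 2 * bothSatProb k μ ^ c / (μ ^ μ * (1 - μ) ^ (1 - μ)) := by
  have h1μ : 0 < 1 - μ := by linarith
  rw [logSecondMomentRate, add_assoc, exp_add, exp_log two_pos, mul_div_assoc,
    rpow_def_of_pos (bothSatProb_pos hk hμ₁), rpow_def_of_pos hμ₀, rpow_def_of_pos h1μ,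
    ← exp_add, ← exp_sub, binEntropy, log_inv, log_inv]
  ring_nf

lemma exp_logSecondMomentRate_half {k : ℕ} (hk : 1 ≤ k) (c : ℝ) :
    exp (logSecondMomentRate k c (1 / 2)) = 4 * (1 - 1 / 2 ^ k) ^ (2 * c) := by
  have hb : 0 < 1 - 1 / (2 : ℝ) ^ k := by
    rw [sub_pos, div_lt_one (by positivity)]; exact one_lt_pow₀ one_lt_two (by omega)
  have hH : binEntropy (1 / 2) = log 2 := by rw [one_div, binEntropy_two_inv]
  rw [logSecondMomentRate, bothSatProb_half, hH, exp_add, exp_add, exp_log two_pos, log_pow,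
    rpow_def_of_pos hb]
  ring_nf

/-- Failure of the plain second moment method on random k-SAT: for every
integer `k ≥ 1` and every ratio `c > 0`, there exists `μ ∈ (0, 1/2)` such
that the exponential growth rate `2 · g(μ)^c / (μ^μ (1−μ)^(1−μ))` of the
second moment of the number of solutions, where
`g(μ) = 1 − 2/2^k + ((1−μ)/2)^k`, strictly exceeds
`4 · (1 − 2^(−k))^(2c)`, its value at `μ = 1/2`, which is the squared
growth rate of the first moment. -/
theorem second_moment_of_solutions_fails (k : ℕ) (hk : 1 ≤ k) (c : ℝ) (hc : 0 < c) :
    ∃ μ ∈ Set.Ioo (0 : ℝ) (1 / 2),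
      4 * (1 - 1 / 2 ^ k) ^ (2 * c) <
        2 * (1 - 2 / 2 ^ k + ((1 - μ) / 2) ^ k) ^ c / (μ ^ μ * (1 - μ) ^ (1 - μ)) := by
  have hslope : c * (-(k / 2 * (1 / 4) ^ (k - 1)) / bothSatProb k (1 / 2)) < 0 := by
    have hk' : (0 : ℝ) < k := Nat.cast_pos.mpr hk
    exact mul_neg_of_pos_of_neg hc
      (div_neg_of_neg_of_pos (by simp only [neg_lt_zero]; positivity)
        (bothSatProb_pos hk (by norm_num)))
  obtain ⟨μ, hlt, hμ⟩ := ((hasDerivAt_logSecondMomentRate_half hk c).eventually_nhdsLT_lt_of_neg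
    hslope |>.and (Ioo_mem_nhdsLT (by norm_num : (0 : ℝ) < 1 / 2))).exists
  refine ⟨μ, hμ, ?_⟩
  have hexp := exp_lt_exp.mpr hlt
  rwa [exp_logSecondMomentRate_half hk, exp_logSecondMomentRate hk c hμ.1 (by linarith [hμ.2])]
    at hexp
end

section
/- Let V be a finite set, k a positive integer, and β : V^k → ℝ satisfying symmetry of occurrences. Define γ_{t,u} = β_t β_u for all (t,u) ∈ V^k × V^k. Then for all (v,w) ∈ V×V, k · Ξ_{v,w} = Σ_v · Σ_w. -/
open Finset

/-- Under symmetry of occurrences, if `γ_{t,u} = β_t β_u` then the pair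
surfaces factorize: `k · Ξ_{v,w} = Σ_v · Σ_w`. -/
theorem independence_of_surfaces {V : Type*} [Fintype V] [DecidableEq V]
    (k : ℕ) (hk : 0 < k) (β : (Fin k → V) → ℝ)
    (hsym : ∀ (t : Fin k → V) (σ : Equiv.Perm (Fin k)), β (t ∘ σ) = β t)
    (v w : V) :
    (k : ℝ) * ∑ t : Fin k → V, ∑ u : Fin k → V,
        (β t * β u) * ((univ.filter fun i : Fin k => t i = v ∧ u i = w).card : ℝ)
      = (∑ t : Fin k → V, β t * ((univ.filter fun i : Fin k => t i = v).card : ℝ)) *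
        (∑ u : Fin k → V, β u * ((univ.filter fun i : Fin k => u i = w).card : ℝ)) := by
  set i0 : Fin k := ⟨0, hk⟩ with hi0
  set S : Fin k → V → ℝ := fun i x => ∑ t : Fin k → V, β t * (if t i = x then 1 else 0)
    with hSdef
  have hS : ∀ (i : Fin k) (x : V), S i x = S i0 x := by
    intro i x
    refine Fintype.sum_equiv (Equiv.arrowCongr (Equiv.swap i i0) (Equiv.refl V))
      _ _ ?_
    intro t
    have h1 : (Equiv.arrowCongr (Equiv.swap i i0) (Equiv.refl V)) t
        = t ∘ (Equiv.swap i i0 : Equiv.Perm (Fin k)) := by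
      funext j
      simp [Equiv.arrowCongr]
    rw [h1, hsym]
    simp [Equiv.swap_apply_right]
  have hcard : ∀ (t : Fin k → V) (x : V),
      ((univ.filter fun i : Fin k => t i = x).card : ℝ)
        = ∑ i : Fin k, (if t i = x then (1:ℝ) else 0) := by
    intro t x
    rw [Finset.card_filter]
    push_cast
    rfl
  have hcard2 : ∀ (t u : Fin k → V),
      ((univ.filter fun i : Fin k => t i = v ∧ u i = w).card : ℝ)
        = ∑ i : Fin k, (if t i = v then (1:ℝ) else 0) * (if u i = w then 1 else 0) := by
    intro t u
    rw [Finset.card_filter]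
    push_cast
    refine Finset.sum_congr rfl fun i _ => ?_
    by_cases h1 : t i = v <;> by_cases h2 : u i = w <;> simp [h1, h2]
  have L : ∑ t : Fin k → V, ∑ u : Fin k → V,
        (β t * β u) * ((univ.filter fun i : Fin k => t i = v ∧ u i = w).card : ℝ)
      = ∑ i : Fin k, S i v * S i w := by
    simp_rw [hcard2, Finset.mul_sum]
    calc ∑ t : Fin k → V, ∑ u : Fin k → V, ∑ i : Fin k,
            (β t * β u) * ((if t i = v then (1:ℝ) else 0) * (if u i = w then 1 else 0))
        = ∑ t : Fin k → V, ∑ i : Fin k, ∑ u : Fin k → V,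
            (β t * β u) * ((if t i = v then (1:ℝ) else 0) * (if u i = w then 1 else 0)) :=
          Finset.sum_congr rfl fun t _ => Finset.sum_comm
      _ = ∑ i : Fin k, ∑ t : Fin k → V, ∑ u : Fin k → V,
            (β t * β u) * ((if t i = v then (1:ℝ) else 0) * (if u i = w then 1 else 0)) :=
          Finset.sum_comm
      _ = ∑ i : Fin k, S i v * S i w := by
          refine Finset.sum_congr rfl fun i _ => ?_
          rw [hSdef]
          rw [Finset.sum_mul_sum]
          exact Finset.sum_congr rfl fun t _ => Finset.sum_congr rfl fun u _ => by ring
  have R : ∀ x : V, ∑ t : Fin k → V, β t * ((univ.filter fun i : Fin k => t i = x).card : ℝ)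
      = (k : ℝ) * S i0 x := by
    intro x
    simp_rw [hcard, Finset.mul_sum]
    rw [Finset.sum_comm]
    calc ∑ i : Fin k, ∑ t : Fin k → V, β t * (if t i = x then (1:ℝ) else 0)
        = ∑ _i : Fin k, S i0 x := Finset.sum_congr rfl fun i _ => hS i x
      _ = (k : ℝ) * S i0 x := by simp [mul_comm]
  rw [L, R, R]
  have : ∑ i : Fin k, S i v * S i w = ∑ _i : Fin k, S i0 v * S i0 w :=
    Finset.sum_congr rfl fun i _ => by rw [hS i v, hS i w]
  rw [this]
  simp
  ring
end

section
/- Let D and V be finite sets, k a positive integer, and c ≥ 0 a real number. Let δ : D → ℝ be positive with Σ_{a∈D} δ_a = 1, let β : V^k → ℝ be nonnegative with Σ_{t∈V^k} β_t = 1, and let η : V → ℝ be positive. Define T1 = (∏_{a∈D} δ_a^{δ_a})^{-1} · ((∏_{v∈V} η_v^{Σ_v}) / (∏_{t∈V^k} β_t^{β_t}))^c, where Σ_v = Σ_{t∈V^k} β_t · #{i : t_i = v}. Define T2 at the independence point, i.e. with μ_{a,b} = δ_a δ_b, γ_{t,u} = β_t β_u and ε_{v,w} = η_v η_w: T2 =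 (∏_{(a,b)∈D×D} (δ_a δ_b)^{δ_a δ_b})^{-1} · ((∏_{(v,w)∈V×V} (η_v η_w)^{Ξ_{v,w}}) / (∏_{(t,u)∈V^k×V^k} (β_t β_u)^{β_t β_u}))^c, where Ξ_{v,w} = Σ_{(t,u)} β_t β_u · #{i : t_i = v and u_i = w}. Then T2 = T1^2. -/
open Finset

lemma rpow_self_pos {x : ℝ} (hx : 0 ≤ x) : 0 < x ^ x := by
  rcases hx.eq_or_lt with h | h
  · rw [← h, Real.rpow_zero]; norm_num
  · exact Real.rpow_pos_of_pos h x

lemma prod_prod_mul_rpow {ι : Type*} [Fintype ι] (f : ι → ℝ) (hf : ∀ a, 0 ≤ f a)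
    (h1 : ∑ a : ι, f a = 1) :
    ∏ a : ι, ∏ b : ι, (f a * f b) ^ (f a * f b) = (∏ a : ι, f a ^ f a) ^ 2 := by
  have hQpos : 0 < ∏ b : ι, f b ^ f b := Finset.prod_pos fun b _ => rpow_self_pos (hf b)
  have key : ∀ a b : ι, (f a * f b) ^ (f a * f b) = (f a ^ f a) ^ f b * (f b ^ f b) ^ f a := by
    intro a b
    rw [Real.mul_rpow (hf a) (hf b), Real.rpow_mul (hf a), mul_comm (f a) (f b),
      Real.rpow_mul (hf b)]
  calc ∏ a : ι, ∏ b : ι, (f a * f b) ^ (f a * f b)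
      = ∏ a : ι, ((∏ b : ι, (f a ^ f a) ^ f b) * ∏ b : ι, (f b ^ f b) ^ f a) := by
        refine Finset.prod_congr rfl fun a _ => ?_
        rw [← Finset.prod_mul_distrib]
        exact Finset.prod_congr rfl fun b _ => key a b
    _ = ∏ a : ι, (f a ^ f a * (∏ b : ι, f b ^ f b) ^ f a) := by
        refine Finset.prod_congr rfl fun a _ => ?_
        rw [← Real.rpow_sum_of_pos (rpow_self_pos (hf a)), h1, Real.rpow_one,
          Real.finset_prod_rpow _ _ (fun b _ => (rpow_self_pos (hf b)).le)]
    _ = (∏ a : ι, f a ^ f a) * (∏ b : ι, f b ^ f b) ^ ∑ a : ι, f a := by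
        rw [Finset.prod_mul_distrib, Real.rpow_sum_of_pos hQpos]
    _ = (∏ a : ι, f a ^ f a) ^ 2 := by rw [h1, Real.rpow_one, sq]

/-- At the independence point (`μ_{a,b} = δ_a δ_b`, `γ_{t,u} = β_t β_u`) and
with `ε_{v,w} = η_v η_w`, the exponential growth rate `T2` of the second
moment equals the square of the exponential growth rate `T1` of the first
moment (real powers with the convention `0 ^ 0 = 1`). -/
theorem T2_eq_T1_sq_at_independence {D V : Type*} [Fintype D] [Fintype V]
    [DecidableEq V] (k : ℕ) (hk : 0 < k) (c : ℝ) (hc : 0 ≤ c)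
    (δ : D → ℝ) (hδ : ∀ a, 0 < δ a) (hδ1 : ∑ a : D, δ a = 1)
    (β : (Fin k → V) → ℝ) (hβ : ∀ t, 0 ≤ β t) (hβ1 : ∑ t : Fin k → V, β t = 1)
    (η : V → ℝ) (hη : ∀ v, 0 < η v) :
    (∏ a : D, ∏ b : D, (δ a * δ b) ^ (δ a * δ b))⁻¹ *
      ((∏ v : V, ∏ w : V, (η v * η w) ^
          (∑ t : Fin k → V, ∑ u : Fin k → V, (β t * β u) *
            ((univ.filter fun i : Fin k => t i = v ∧ u i = w).card : ℝ))) /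
        (∏ t : Fin k → V, ∏ u : Fin k → V, (β t * β u) ^ (β t * β u))) ^ c
    = ((∏ a : D, δ a ^ δ a)⁻¹ *
        ((∏ v : V, η v ^
            (∑ t : Fin k → V, β t *
              ((univ.filter fun i : Fin k => t i = v).card : ℝ))) /
          (∏ t : Fin k → V, β t ^ β t)) ^ c) ^ 2 := by
  set Ξ : V → V → ℝ := fun v w => ∑ t : Fin k → V, ∑ u : Fin k → V, (β t * β u) *
      ((univ.filter fun i : Fin k => t i = v ∧ u i = w).card : ℝ) with hΞ
  set S : V → ℝ := fun v => ∑ t : Fin k → V, β t *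
      ((univ.filter fun i : Fin k => t i = v).card : ℝ) with hS
  have hcard : ∀ (t u : Fin k → V) (v : V),
      ∑ w : V, ((univ.filter fun i : Fin k => t i = v ∧ u i = w).card : ℝ)
        = ((univ.filter fun i : Fin k => t i = v).card : ℝ) := by
    intro t u v
    rw [← Nat.cast_sum]
    congr 1
    simp only [Finset.card_filter]
    rw [Finset.sum_comm]
    refine Finset.sum_congr rfl fun i _ => ?_
    by_cases h : t i = v <;> simp [h]
  have hcard' : ∀ (t u : Fin k → V) (w : V),
      ∑ v : V, ((univ.filter fun i : Fin k => t i = v ∧ u i = w).card : ℝ)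
        = ((univ.filter fun i : Fin k => u i = w).card : ℝ) := by
    intro t u w
    rw [← Nat.cast_sum]
    congr 1
    simp only [Finset.card_filter]
    rw [Finset.sum_comm]
    refine Finset.sum_congr rfl fun i _ => ?_
    by_cases h : u i = w <;> simp [h]
  have hrow : ∀ v, ∑ w : V, Ξ v w = S v := by
    intro v
    rw [hΞ, Finset.sum_comm]
    refine Finset.sum_congr rfl fun t _ => ?_
    rw [Finset.sum_comm]
    have e1 : ∀ u : Fin k → V, ∑ w : V, (β t * β u) *
        ((univ.filter fun i : Fin k => t i = v ∧ u i = w).card : ℝ)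
        = β t * ((univ.filter fun i : Fin k => t i = v).card : ℝ) * β u := by
      intro u; rw [← Finset.mul_sum, hcard t u v]; ring
    simp only [e1]
    rw [← Finset.mul_sum, hβ1, mul_one]
  have hcol : ∀ w, ∑ v : V, Ξ v w = S w := by
    intro w
    rw [hΞ, Finset.sum_comm]
    have e2 : ∀ t : Fin k → V, (∑ v : V, ∑ u : Fin k → V, (β t * β u) *
        ((univ.filter fun i : Fin k => t i = v ∧ u i = w).card : ℝ))
        = β t * S w := by
      intro t
      rw [Finset.sum_comm]
      have e1 : ∀ u : Fin k → V, ∑ v : V, (β t * β u) *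
          ((univ.filter fun i : Fin k => t i = v ∧ u i = w).card : ℝ)
          = β u * ((univ.filter fun i : Fin k => u i = w).card : ℝ) * β t := by
        intro u; rw [← Finset.mul_sum, hcard' t u w]; ring
      simp only [e1]
      rw [← Finset.sum_mul, hS]
      ring
    simp only [e2]
    rw [← Finset.sum_mul, hβ1, one_mul]
  -- positive quantities
  have hN : 0 < ∏ v : V, η v ^ S v :=
    Finset.prod_pos fun v _ => Real.rpow_pos_of_pos (hη v) _
  have hB : 0 < ∏ t : Fin k → V, β t ^ β t :=
    Finset.prod_pos fun t _ => rpow_self_pos (hβ t)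
  -- numerator
  have hnum : ∏ v : V, ∏ w : V, (η v * η w) ^ Ξ v w = (∏ v : V, η v ^ S v) ^ 2 := by
    calc ∏ v : V, ∏ w : V, (η v * η w) ^ Ξ v w
        = (∏ v : V, ∏ w : V, η v ^ Ξ v w) * ∏ v : V, ∏ w : V, η w ^ Ξ v w := by
          rw [← Finset.prod_mul_distrib]
          refine Finset.prod_congr rfl fun v _ => ?_
          rw [← Finset.prod_mul_distrib]
          exact Finset.prod_congr rfl fun w _ =>
            Real.mul_rpow (hη v).le (hη w).le
      _ = (∏ v : V, η v ^ S v) * ∏ w : V, η w ^ S w := by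
          rw [Finset.prod_comm (f := fun v w => η w ^ Ξ v w)]
          congr 1
          · exact Finset.prod_congr rfl fun v _ => by
              rw [← Real.rpow_sum_of_pos (hη v), hrow]
          · exact Finset.prod_congr rfl fun w _ => by
              rw [← Real.rpow_sum_of_pos (hη w), hcol]
      _ = (∏ v : V, η v ^ S v) ^ 2 := (sq _).symm
  rw [prod_prod_mul_rpow δ (fun a => (hδ a).le) hδ1,
    prod_prod_mul_rpow β hβ hβ1, hnum]
  set N := ∏ v : V, η v ^ S v
  set B := ∏ t : Fin k → V, β t ^ β t
  have hNB : (0:ℝ) ≤ N / B := div_nonneg hN.le hB.le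
  rw [← div_pow, sq (N / B), Real.mul_rpow hNB hNB, ← sq, ← inv_pow, ← mul_pow]
end

section
/- Let d : ℕ×ℕ → ℝ be a finitely supported nonnegative function with Σ_{(p,q)} d_{p,q} = 1 and Σ_{(p,q)} (p+q) d_{p,q} = K for some real K > 0, and let δ : ℕ×ℕ → ℝ. Define η_T = (1/K) Σ_{(p,q)} (p δ_{p,q} + q(1−δ_{p,q})) d_{p,q}, η_F = (1/K) Σ_{(p,q)} (q δ_{p,q} + p(1−δ_{p,q})) d_{p,q}, and ε_{T,F} = (1/K) Σ_{(p,q)} (p+q) δ_{p,q}(1−δ_{p,q}) d_{p,q}. Then, writing δ'_{p,q} = δ_{p,q} − 1/2, one has ε_{T,F} − η_T η_F = ((1/K) Σ_{(p,q)} (p−q) δ'_{p,q} d_{p,q})^2 − (1/K) Σ_{(p,q)} (p+q) (δ'_{p,q})^2 d_{p,q}. -/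
open Finset

/-- Distributional model: with `η_T`, `η_F` the proportions of true / false
literal occurrences and `ε_{T,F}` the overlap proportion at the independence
point `μ_{p,q} = δ_{p,q}(1−δ_{p,q})`, writing `δ'_{p,q} = δ_{p,q} − 1/2`,
one has
`ε_{T,F} − η_T η_F = ((1/K) Σ (p−q) δ' d)² − (1/K) Σ (p+q) δ'² d`. -/
theorem distributional_eps_minus_eta_eta
    (d : ℕ × ℕ →₀ ℝ) (hd : ∀ pq, 0 ≤ d pq)
    (hd1 : ∑ pq ∈ d.support, d pq = 1)
    (K : ℝ) (hK : 0 < K)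
    (hK2 : ∑ pq ∈ d.support, ((pq.1 : ℝ) + (pq.2 : ℝ)) * d pq = K)
    (δ : ℕ × ℕ → ℝ) :
    (1 / K) * ∑ pq ∈ d.support,
        ((pq.1 : ℝ) + (pq.2 : ℝ)) * (δ pq * (1 - δ pq)) * d pq
      - ((1 / K) * ∑ pq ∈ d.support,
            ((pq.1 : ℝ) * δ pq + (pq.2 : ℝ) * (1 - δ pq)) * d pq) *
        ((1 / K) * ∑ pq ∈ d.support,
            ((pq.2 : ℝ) * δ pq + (pq.1 : ℝ) * (1 - δ pq)) * d pq)
    = ((1 / K) * ∑ pq ∈ d.support,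
          ((pq.1 : ℝ) - (pq.2 : ℝ)) * (δ pq - 1 / 2) * d pq) ^ 2
      - (1 / K) * ∑ pq ∈ d.support,
          ((pq.1 : ℝ) + (pq.2 : ℝ)) * (δ pq - 1 / 2) ^ 2 * d pq := by
  have h1 : ∑ pq ∈ d.support,
      ((pq.1 : ℝ) + (pq.2 : ℝ)) * (δ pq * (1 - δ pq)) * d pq
      = (∑ pq ∈ d.support, ((pq.1 : ℝ) + (pq.2 : ℝ)) * d pq) / 4
        - ∑ pq ∈ d.support, ((pq.1 : ℝ) + (pq.2 : ℝ)) * (δ pq - 1 / 2) ^ 2 * d pq := by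
    rw [Finset.sum_div, ← Finset.sum_sub_distrib]
    exact Finset.sum_congr rfl fun pq _ => by ring
  have h2 : ∑ pq ∈ d.support, ((pq.1 : ℝ) * δ pq + (pq.2 : ℝ) * (1 - δ pq)) * d pq
      = (∑ pq ∈ d.support, ((pq.1 : ℝ) - (pq.2 : ℝ)) * (δ pq - 1 / 2) * d pq)
        + (∑ pq ∈ d.support, ((pq.1 : ℝ) + (pq.2 : ℝ)) * d pq) / 2 := by
    rw [Finset.sum_div, ← Finset.sum_add_distrib]
    exact Finset.sum_congr rfl fun pq _ => by ring
  have h3 : ∑ pq ∈ d.support, ((pq.2 : ℝ) * δ pq + (pq.1 : ℝ) * (1 - δ pq)) * d pq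
      = (∑ pq ∈ d.support, ((pq.1 : ℝ) + (pq.2 : ℝ)) * d pq) / 2
        - (∑ pq ∈ d.support, ((pq.1 : ℝ) - (pq.2 : ℝ)) * (δ pq - 1 / 2) * d pq) := by
    rw [Finset.sum_div, ← Finset.sum_sub_distrib]
    exact Finset.sum_congr rfl fun pq _ => by ring
  rw [h1, h2, h3, hK2]
  field_simp
  ring
end

section
/- Let d : ℕ×ℕ → ℝ be a finitely supported nonnegative function with Σ_{(p,q)} d_{p,q} = 1 and Σ_{(p,q)} (p+q) d_{p,q} = K for some real K > 0, and let δ : ℕ×ℕ → ℝ with 0 ≤ δ_{p,q} ≤ 1 for all (p,q). Define η_T = (1/K) Σ_{(p,q)} (p δ_{p,q} + q(1−δ_{p,q})) d_{p,q}, η_F = (1/K) Σ_{(p,q)} (q δ_{p,q} + p(1−δ_{p,q})) d_{p,q}, and ε_{T,F} = (1/K) Σ_{(p,q)} (p+q) δ_{p,q}(1−δ_{p,q}) d_{p,q}. Then ε_{T,F} ≤ η_T η_F. Moreover, if there exist p ≥ 1 and q ≥ 1 with d_{p,q} > 0 (the model allows non-pure literals), then ε_{T,F} = η_T η_F if and only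 if δ_{p,q} = 1/2 for every (p,q) with (p+q) d_{p,q} ≠ 0. -/
/-!
With weights `w = d`, expanding both sides gives the Lagrange-type identity
  `2 K² (η_T η_F - ε) = ∑ᵢ ∑ⱼ wᵢ wⱼ ((pᵢqⱼ + qᵢpⱼ)(δᵢ + δⱼ - 1)² + (pᵢpⱼ + qᵢqⱼ)(δᵢ - δⱼ)²)`,
whose right-hand side is visibly nonnegative. It vanishes exactly when every pair term does. A
variable with `p, q ≥ 1` forces, paired with any other occurring variable, `δᵢ + δⱼ = 1` and
`δᵢ = δⱼ`, i.e. `δᵢ = 1/2`; conversely all pair terms vanish when `δ ≡ 1/2` on occurring variables.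
-/

open Finset

section Occurrences

variable {ι : Type*} (s : Finset ι) (w p q δ : ι → ℝ)

noncomputable def trueOcc : ℝ := ∑ i ∈ s, (p i * δ i + q i * (1 - δ i)) * w i

noncomputable def falseOcc : ℝ := ∑ i ∈ s, (q i * δ i + p i * (1 - δ i)) * w i

noncomputable def totalOcc : ℝ := ∑ i ∈ s, (p i + q i) * w i

noncomputable def overlapOcc : ℝ := ∑ i ∈ s, (p i + q i) * (δ i * (1 - δ i)) * w i

def pairDefect (p q x p' q' x' : ℝ) : ℝ :=
  (p * q' + q * p') * (x + x' - 1) ^ 2 + (p * p' + q * q') * (x - x') ^ 2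

theorem pairDefect_comm (p q x p' q' x' : ℝ) :
    pairDefect p q x p' q' x' = pairDefect p' q' x' p q x := by
  unfold pairDefect; ring

theorem pairDefect_half_half (p q p' q' : ℝ) : pairDefect p q (1 / 2) p' q' (1 / 2) = 0 := by
  unfold pairDefect; ring

theorem pairDefect_nonneg {p q p' q' : ℝ} (hp : 0 ≤ p) (hq : 0 ≤ q) (hp' : 0 ≤ p') (hq' : 0 ≤ q')
    (x x' : ℝ) : 0 ≤ pairDefect p q x p' q' x' := by
  unfold pairDefect; positivity

theorem mul_add_mul_pos {p q a b : ℝ} (hp : 0 ≤ p) (hq : 0 ≤ q) (hpq : 0 < p + q) (ha : 0 < a)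
    (hb : 0 < b) : 0 < p * a + q * b := by
  rcases hp.lt_or_eq with hp₀ | rfl
  · exact add_pos_of_pos_of_nonneg (mul_pos hp₀ ha) (mul_nonneg hq hb.le)
  · simpa using mul_pos (by simpa using hpq) hb

theorem eq_half_of_pairDefect_eq_zero {p q x p' q' x' : ℝ} (hp : 0 ≤ p) (hq : 0 ≤ q)
    (hpq : 0 < p + q) (hp' : 0 < p') (hq' : 0 < q') (h : pairDefect p q x p' q' x' = 0) :
    x = 1 / 2 := by
  have hc₁ : 0 < p * q' + q * p' := mul_add_mul_pos hp hq hpq hq' hp'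
  have hc₂ : 0 < p * p' + q * q' := mul_add_mul_pos hp hq hpq hp' hq'
  obtain ⟨h₁, h₂⟩ := (add_eq_zero_iff_of_nonneg (mul_nonneg hc₁.le (sq_nonneg _))
    (mul_nonneg hc₂.le (sq_nonneg _))).1 h
  have hsum : x + x' - 1 = 0 := pow_eq_zero_iff two_ne_zero |>.1 <|
    (mul_eq_zero.1 h₁).resolve_left hc₁.ne'
  have hdiff : x - x' = 0 := pow_eq_zero_iff two_ne_zero |>.1 <|
    (mul_eq_zero.1 h₂).resolve_left hc₂.ne'
  linarith

theorem mul_pairDefect_eq_zero_of_mul_eq_zero {w p q : ℝ} (hw : 0 ≤ w) (hp : 0 ≤ p) (hq : 0 ≤ q)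
    (h : (p + q) * w = 0) (x p' q' x' : ℝ) : w * pairDefect p q x p' q' x' = 0 := by
  obtain ⟨hpw, hqw⟩ := (add_eq_zero_iff_of_nonneg (mul_nonneg hp hw) (mul_nonneg hq hw)).1
    (by rw [← add_mul]; exact h)
  unfold pairDefect
  linear_combination (q' * (x + x' - 1) ^ 2 + p' * (x - x') ^ 2) * hpw
    + (p' * (x + x' - 1) ^ 2 + q' * (x - x') ^ 2) * hqw

theorem two_mul_sub_eq_sum_sum_pairDefect :
    2 * (trueOcc s w p q δ * falseOcc s w p q δ - totalOcc s w p q * overlapOcc s w p q δ) =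
      ∑ i ∈ s, ∑ j ∈ s, w i * w j * pairDefect (p i) (q i) (δ i) (p j) (q j) (δ j) := by
  have hterm : ∀ i j, w i * w j * pairDefect (p i) (q i) (δ i) (p j) (q j) (δ j) =
      (p i * δ i + q i * (1 - δ i)) * w i * ((q j * δ j + p j * (1 - δ j)) * w j)
      + (p j * δ j + q j * (1 - δ j)) * w j * ((q i * δ i + p i * (1 - δ i)) * w i)
      - (p i + q i) * w i * ((p j + q j) * (δ j * (1 - δ j)) * w j)
      - (p j + q j) * w j * ((p i + q i) * (δ i * (1 - δ i)) * w i) := by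
    intro i j; unfold pairDefect; ring
  simp only [hterm, sum_add_distrib, sum_sub_distrib, ← mul_sum, ← sum_mul, trueOcc, falseOcc,
    totalOcc, overlapOcc]
  ring

variable {s w p q δ}

theorem mul_mul_pairDefect_nonneg (hw : ∀ i, 0 ≤ w i) (hp : ∀ i, 0 ≤ p i) (hq : ∀ i, 0 ≤ q i)
    (i j : ι) : 0 ≤ w i * w j * pairDefect (p i) (q i) (δ i) (p j) (q j) (δ j) :=
  mul_nonneg (mul_nonneg (hw i) (hw j)) (pairDefect_nonneg (hp i) (hq i) (hp j) (hq j) _ _)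

theorem totalOcc_mul_overlapOcc_le (hw : ∀ i, 0 ≤ w i) (hp : ∀ i, 0 ≤ p i) (hq : ∀ i, 0 ≤ q i) :
    totalOcc s w p q * overlapOcc s w p q δ ≤ trueOcc s w p q δ * falseOcc s w p q δ := by
  have h := two_mul_sub_eq_sum_sum_pairDefect s w p q δ
  have : 0 ≤ ∑ i ∈ s, ∑ j ∈ s, w i * w j * pairDefect (p i) (q i) (δ i) (p j) (q j) (δ j) :=
    sum_nonneg fun i _ => sum_nonneg fun j _ => mul_mul_pairDefect_nonneg hw hp hq i j
  linarith

theorem totalOcc_mul_overlapOcc_eq_iff (hw : ∀ i, 0 ≤ w i) (hp : ∀ i, 0 ≤ p i)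
    (hq : ∀ i, 0 ≤ q i) :
    totalOcc s w p q * overlapOcc s w p q δ = trueOcc s w p q δ * falseOcc s w p q δ ↔
      ∀ i ∈ s, ∀ j ∈ s, w i * w j * pairDefect (p i) (q i) (δ i) (p j) (q j) (δ j) = 0 := by
  have hterm (i : ι) : ∀ j ∈ s,
      0 ≤ w i * w j * pairDefect (p i) (q i) (δ i) (p j) (q j) (δ j) := fun j _ =>
    mul_mul_pairDefect_nonneg hw hp hq i j
  rw [eq_comm, ← sub_eq_zero, ← mul_eq_zero_iff_left two_ne_zero,
    two_mul_sub_eq_sum_sum_pairDefect, sum_eq_zero_iff_of_nonneg fun i _ => sum_nonneg (hterm i)]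
  exact forall₂_congr fun i _ => sum_eq_zero_iff_of_nonneg (hterm i)

theorem totalOcc_mul_overlapOcc_eq_iff_eq_half (hw : ∀ i, 0 ≤ w i) (hp : ∀ i, 0 ≤ p i)
    (hq : ∀ i, 0 ≤ q i) {i₀ : ι} (hi₀ : i₀ ∈ s) (hw₀ : 0 < w i₀) (hp₀ : 0 < p i₀)
    (hq₀ : 0 < q i₀) :
    totalOcc s w p q * overlapOcc s w p q δ = trueOcc s w p q δ * falseOcc s w p q δ ↔
      ∀ i ∈ s, (p i + q i) * w i ≠ 0 → δ i = 1 / 2 := by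
  rw [totalOcc_mul_overlapOcc_eq_iff hw hp hq]
  constructor
  · intro h i hi hne
    have hpq : 0 < p i + q i := (add_nonneg (hp i) (hq i)).lt_of_ne' (left_ne_zero_of_mul hne)
    have hwi : w i * w i₀ ≠ 0 := mul_ne_zero (right_ne_zero_of_mul hne) hw₀.ne'
    exact eq_half_of_pairDefect_eq_zero (hp i) (hq i) hpq hp₀ hq₀
      ((mul_eq_zero.1 (h i hi i₀ hi₀)).resolve_left hwi)
  · intro h i hi j hj
    by_cases hi' : (p i + q i) * w i = 0
    · rw [mul_right_comm, mul_pairDefect_eq_zero_of_mul_eq_zero (hw i) (hp i) (hq i) hi', zero_mul]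
    by_cases hj' : (p j + q j) * w j = 0
    · rw [mul_assoc, pairDefect_comm,
        mul_pairDefect_eq_zero_of_mul_eq_zero (hw j) (hp j) (hq j) hj', mul_zero]
    rw [h i hi hi', h j hj hj', pairDefect_half_half, mul_zero]

theorem one_div_mul_eq_one_div_sq_mul_mul (K x : ℝ) : 1 / K * x = (1 / K) ^ 2 * (K * x) := by
  rcases eq_or_ne K 0 with rfl | hK
  · simp
  · field_simp

theorem one_div_mul_overlapOcc_le {K : ℝ} (hw : ∀ i, 0 ≤ w i) (hp : ∀ i, 0 ≤ p i)
    (hq : ∀ i, 0 ≤ q i) (hK : totalOcc s w p q = K) :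
    1 / K * overlapOcc s w p q δ ≤ 1 / K * trueOcc s w p q δ * (1 / K * falseOcc s w p q δ) := by
  rw [one_div_mul_eq_one_div_sq_mul_mul, mul_mul_mul_comm, ← sq, ← hK]
  exact mul_le_mul_of_nonneg_left (totalOcc_mul_overlapOcc_le hw hp hq) (sq_nonneg _)

theorem one_div_mul_overlapOcc_eq_iff_eq_half {K : ℝ} (hw : ∀ i, 0 ≤ w i) (hp : ∀ i, 0 ≤ p i)
    (hq : ∀ i, 0 ≤ q i) (hK : totalOcc s w p q = K) {i₀ : ι} (hi₀ : i₀ ∈ s) (hw₀ : 0 < w i₀)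
    (hp₀ : 0 < p i₀) (hq₀ : 0 < q i₀) :
    1 / K * overlapOcc s w p q δ = 1 / K * trueOcc s w p q δ * (1 / K * falseOcc s w p q δ) ↔
      ∀ i ∈ s, (p i + q i) * w i ≠ 0 → δ i = 1 / 2 := by
  have hpos : 0 < totalOcc s w p q :=
    sum_pos' (fun i _ => mul_nonneg (add_nonneg (hp i) (hq i)) (hw i))
      ⟨i₀, hi₀, mul_pos (add_pos hp₀ hq₀) hw₀⟩
  rw [one_div_mul_eq_one_div_sq_mul_mul, mul_mul_mul_comm, ← sq, ← hK,
    mul_right_inj' (pow_ne_zero 2 (one_div_ne_zero hpos.ne'))]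
  exact totalOcc_mul_overlapOcc_eq_iff_eq_half hw hp hq hi₀ hw₀ hp₀ hq₀

end Occurrences

theorem distributional_eps_le_eta_eta_general
    (d : ℕ × ℕ →₀ ℝ) (hd : ∀ pq, 0 ≤ d pq)
    (K : ℝ)
    (hK2 : ∑ pq ∈ d.support, ((pq.1 : ℝ) + (pq.2 : ℝ)) * d pq = K)
    (δ : ℕ × ℕ → ℝ) :
    ((1 / K) * ∑ pq ∈ d.support,
        ((pq.1 : ℝ) + (pq.2 : ℝ)) * (δ pq * (1 - δ pq)) * d pq
      ≤ ((1 / K) * ∑ pq ∈ d.support,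
            ((pq.1 : ℝ) * δ pq + (pq.2 : ℝ) * (1 - δ pq)) * d pq) *
        ((1 / K) * ∑ pq ∈ d.support,
            ((pq.2 : ℝ) * δ pq + (pq.1 : ℝ) * (1 - δ pq)) * d pq)) ∧
    ((∃ p q : ℕ, 1 ≤ p ∧ 1 ≤ q ∧ 0 < d (p, q)) →
      ((1 / K) * ∑ pq ∈ d.support,
          ((pq.1 : ℝ) + (pq.2 : ℝ)) * (δ pq * (1 - δ pq)) * d pq
        = ((1 / K) * ∑ pq ∈ d.support,
              ((pq.1 : ℝ) * δ pq + (pq.2 : ℝ) * (1 - δ pq)) * d pq) *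
          ((1 / K) * ∑ pq ∈ d.support,
              ((pq.2 : ℝ) * δ pq + (pq.1 : ℝ) * (1 - δ pq)) * d pq)
        ↔ ∀ pq : ℕ × ℕ, ((pq.1 : ℝ) + (pq.2 : ℝ)) * d pq ≠ 0 → δ pq = 1 / 2)) := by
  have hp : ∀ pq : ℕ × ℕ, (0 : ℝ) ≤ pq.1 := fun _ => Nat.cast_nonneg _
  have hq : ∀ pq : ℕ × ℕ, (0 : ℝ) ≤ pq.2 := fun _ => Nat.cast_nonneg _
  refine ⟨one_div_mul_overlapOcc_le (δ := δ) hd hp hq hK2, ?_⟩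
  rintro ⟨p₀, q₀, hp₀, hq₀, hd₀⟩
  refine (one_div_mul_overlapOcc_eq_iff_eq_half hd hp hq hK2 (Finsupp.mem_support_iff.2 hd₀.ne')
    hd₀ (by exact_mod_cast hp₀) (by exact_mod_cast hq₀)).trans ?_
  exact ⟨fun h pq hpq => h pq (Finsupp.mem_support_iff.2 (right_ne_zero_of_mul hpq)) hpq,
    fun h pq _ => h pq⟩

/-- Distributional model: `ε_{T,F} ≤ η_T η_F`, and if the model allows
non-pure literals (some variable has both positive and negative
occurrences), then equality holds iff `δ_{p,q} = 1/2` for every `(p,q)`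
with `(p+q) d_{p,q} ≠ 0`. -/
theorem distributional_eps_le_eta_eta
    (d : ℕ × ℕ →₀ ℝ) (hd : ∀ pq, 0 ≤ d pq)
    (hd1 : ∑ pq ∈ d.support, d pq = 1)
    (K : ℝ) (hK : 0 < K)
    (hK2 : ∑ pq ∈ d.support, ((pq.1 : ℝ) + (pq.2 : ℝ)) * d pq = K)
    (δ : ℕ × ℕ → ℝ) (hδ : ∀ pq, δ pq ∈ Set.Icc (0 : ℝ) 1) :
    ((1 / K) * ∑ pq ∈ d.support,
        ((pq.1 : ℝ) + (pq.2 : ℝ)) * (δ pq * (1 - δ pq)) * d pq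
      ≤ ((1 / K) * ∑ pq ∈ d.support,
            ((pq.1 : ℝ) * δ pq + (pq.2 : ℝ) * (1 - δ pq)) * d pq) *
        ((1 / K) * ∑ pq ∈ d.support,
            ((pq.2 : ℝ) * δ pq + (pq.1 : ℝ) * (1 - δ pq)) * d pq)) ∧
    ((∃ p q : ℕ, 1 ≤ p ∧ 1 ≤ q ∧ 0 < d (p, q)) →
      ((1 / K) * ∑ pq ∈ d.support,
          ((pq.1 : ℝ) + (pq.2 : ℝ)) * (δ pq * (1 - δ pq)) * d pq
        = ((1 / K) * ∑ pq ∈ d.support,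
              ((pq.1 : ℝ) * δ pq + (pq.2 : ℝ) * (1 - δ pq)) * d pq) *
          ((1 / K) * ∑ pq ∈ d.support,
              ((pq.2 : ℝ) * δ pq + (pq.1 : ℝ) * (1 - δ pq)) * d pq)
        ↔ ∀ pq : ℕ × ℕ, ((pq.1 : ℝ) + (pq.2 : ℝ)) * d pq ≠ 0 → δ pq = 1 / 2)) :=
  distributional_eps_le_eta_eta_general d hd K hK2 δ
end
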